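/- Let p be a prime, F : F_{p^n} → F_{p^m}, c ∈ F_{p^m}. For u ∈ F_{p^n} and b ∈ F_{p^m}, define the c-autocorrelation _cC_F(u,b) = Σ_{x ∈ F_{p^n}} ζ^{Tr_m(b(F(x+u) - c·F(x)))}, and the Walsh transform W_F(a,b) = Σ_{x ∈ F_{p^n}} ζ^{Tr_m(bF(x)) - Tr_n(ax)}. Then for all x ∈ F_{p^n} and b ∈ F_{p^m}: Σ_{u ∈ F_{p^n}} _cC_F(u,b) · ζ^{-Tr_n(ux)} = W_F(x,b) · conj(W_F(x,bc)). -/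

import Mathlib

/-!
All exponentials are values of additive characters: `ζ ^ a.val` is the standard character of
`ZMod p`, so `ζ ^ Tr (b (F (y + u) - c F y)) = f (y + u) * conj (g y)` with
`f y = ζ ^ Tr (b F y)` and `g y = ζ ^ Tr (b c F y)`, and `u ↦ ζ ^ Tr (u x)` is a character `χ` of
`K`. The identity is then the convolution theorem for the cross-correlation of `f` and `g`:
substituting `z = y + u` and splitting `χ (-u) = χ (-z) * conj (χ (-y))` factors the double sum.
-/

open Finset Complex

noncomputable def zeta (p : ℕ) : ℂ := Complex.exp (2 * Real.pi * Complex.I / p)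

noncomputable def absTr (p : ℕ) (K : Type) [Field K] [Fintype K] [CharP K p] : K → ZMod p :=
  letI := ZMod.algebra K p
  Algebra.trace (ZMod p) K

theorem AddChar.sum_sum_add_mul_conj_mul {G K : Type*} [AddCommGroup G] [Fintype G] [RCLike K]
    (χ : AddChar G K) (f g : G → K) :
    ∑ u, (∑ y, f (y + u) * starRingEnd K (g y)) * χ (-u)
      = (∑ y, f y * χ (-y)) * starRingEnd K (∑ y, g y * χ (-y)) := by
  calc ∑ u, (∑ y, f (y + u) * starRingEnd K (g y)) * χ (-u)
      = ∑ y, ∑ u, f (y + u) * χ (-(y + u)) * (starRingEnd K (g y) * χ y) := by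
        simp_rw [sum_mul]
        rw [sum_comm]
        refine sum_congr rfl fun y _ => sum_congr rfl fun u _ => ?_
        rw [mul_mul_mul_comm, ← AddChar.map_add_eq_mul, show -(y + u) + y = -u by abel, mul_assoc]
    _ = ∑ y, (∑ z, f z * χ (-z)) * (starRingEnd K (g y) * χ y) := by
        refine sum_congr rfl fun y _ => ?_
        rw [← sum_mul]
        congr 1
        exact Fintype.sum_equiv (Equiv.addLeft y) _ _ fun _ => rfl
    _ = (∑ y, f y * χ (-y)) * starRingEnd K (∑ y, g y * χ (-y)) := by
        simp only [map_sum, map_mul, AddChar.map_neg_eq_conj, RCLike.conj_conj, mul_sum]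

theorem zeta_pow_val_eq_stdAddChar {p : ℕ} [NeZero p] (a : ZMod p) :
    zeta p ^ a.val = ZMod.stdAddChar a := by
  rw [ZMod.stdAddChar_apply, ZMod.toCircle_apply, zeta, ← Complex.exp_nat_mul]
  ring_nf

theorem absTr_sub (p : ℕ) (K : Type) [Field K] [Fintype K] [CharP K p] (a b : K) :
    absTr p K (a - b) = absTr p K a - absTr p K b :=
  map_sub _ a b

theorem absTr_neg (p : ℕ) (K : Type) [Field K] [Fintype K] [CharP K p] (a : K) :
    absTr p K (-a) = -absTr p K a :=
  map_neg _ a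

noncomputable def traceChar (p : ℕ) [NeZero p] (K : Type) [Field K] [Fintype K] [CharP K p]
    (x : K) : AddChar K ℂ :=
  letI := ZMod.algebra K p
  ZMod.stdAddChar.compAddMonoidHom
    ((Algebra.trace (ZMod p) K).toAddMonoidHom.comp (AddMonoidHom.mulRight x))

theorem traceChar_apply (p : ℕ) [NeZero p] (K : Type) [Field K] [Fintype K] [CharP K p]
    (x u : K) : traceChar p K x u = ZMod.stdAddChar (absTr p K (u * x)) := rfl

theorem stmt_4_general (p : ℕ) [Fact p.Prime]
    (K L : Type) [Field K] [Fintype K] [CharP K p] [Field L] [Fintype L] [CharP L p]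
    (F : K → L) (c : L) (x : K) (b : L) :
    (∑ u : K, (∑ y : K, zeta p ^ (absTr p L (b * (F (y + u) - c * F y))).val)
        * zeta p ^ (-(absTr p K (u * x))).val)
      = (∑ y : K, zeta p ^ (absTr p L (b * F y) - absTr p K (x * y)).val)
        * (starRingEnd ℂ)
            (∑ y : K, zeta p ^ (absTr p L (b * c * F y) - absTr p K (x * y)).val) := by
  have hψ_sub (a a' : ZMod p) :
      ZMod.stdAddChar (a - a') = ZMod.stdAddChar a * starRingEnd ℂ (ZMod.stdAddChar a') := by
    rw [sub_eq_add_neg, AddChar.map_add_eq_mul, AddChar.map_neg_eq_conj]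
  have hχ (u : K) : ZMod.stdAddChar (-absTr p K (u * x)) = traceChar p K x (-u) := by
    rw [traceChar_apply, neg_mul, absTr_neg]
  have hχ_conj (u : K) :
      starRingEnd ℂ (ZMod.stdAddChar (absTr p K (u * x))) = traceChar p K x (-u) := by
    rw [← AddChar.map_neg_eq_conj, hχ]
  simp only [zeta_pow_val_eq_stdAddChar, mul_sub, absTr_sub, hψ_sub, hχ, hχ_conj, mul_comm x,
    ← mul_assoc b c]
  exact (traceChar p K x).sum_sum_add_mul_conj_mul (fun y ↦ ZMod.stdAddChar (absTr p L (b * F y)))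
    (fun y ↦ ZMod.stdAddChar (absTr p L (b * c * F y)))

/-- Fourier relation between the c-autocorrelation and the Walsh transform:
`Σ_u cC_F(u,b) ζ^{-Tr_n(u x)} = W_F(x,b) conj (W_F(x, b c))`. -/
theorem stmt_4 (p n m : ℕ) [Fact p.Prime]
    (K L : Type) [Field K] [Fintype K] [CharP K p] [Field L] [Fintype L] [CharP L p]
    (hK : Fintype.card K = p ^ n) (hL : Fintype.card L = p ^ m)
    (F : K → L) (c : L) (x : K) (b : L) :
    (∑ u : K, (∑ y : K, zeta p ^ (absTr p L (b * (F (y + u) - c * F y))).val)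
        * zeta p ^ (-(absTr p K (u * x))).val)
      = (∑ y : K, zeta p ^ (absTr p L (b * F y) - absTr p K (x * y)).val)
        * (starRingEnd ℂ)
            (∑ y : K, zeta p ^ (absTr p L (b * c * F y) - absTr p K (x * y)).val) :=
  stmt_4_general p K L F c x b
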